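/- arXiv:0903.4860 — 4 statements merged into one kernel-verified Lean document; each statement's English description precedes it below -/
import Mathlib

section
/- Let p̂ be a consistent family of marginals: for each factor a and i ∈ a, ∑_{x_{a\i}} p̂_a(x_a) = p̂_i(x_i), with all values strictly positive. Define φ̂_i := p̂_i and ψ̂_a(x_a) := p̂_a(x_a) / ∏_{i∈a} p̂_i(x_i). Then the constant messages m_{a→i}(x_i) ≡ 1 form a fixed point of the belief propagation update rules for (φ̂, ψ̂), and the resulting beliefs equal the prescribed marginals: b_a = p̂_a and b_i = p̂_i. -/
open Finset

/-- for a consistent family of strictly positive marginals `p̂`,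
with `φ̂_i := p̂_i` and `ψ̂_a := p̂_a / ∏_{i∈a} p̂_i`, the constant messages
`m ≡ 1` form a BP fixed point, and the resulting beliefs equal the prescribed
marginals `p̂_a` and `p̂_i`. -/
theorem constant_messages_fixed_point
    {V F : Type*} [Fintype V] [Fintype F] [DecidableEq V] [DecidableEq F]
    {q : ℕ} (A : F → Finset V)
    (pA : ∀ a : F, ({x // x ∈ A a} → Fin q) → ℝ) (pI : V → Fin q → ℝ)
    (hpA : ∀ a τ, 0 < pA a τ) (hpI : ∀ i xi, 0 < pI i xi)
    -- consistency of the marginal family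
    (hcons : ∀ (a : F) (i : V) (hi : i ∈ A a) (xi : Fin q),
      ∑ τ ∈ Finset.univ.filter
          (fun τ : {x // x ∈ A a} → Fin q => τ ⟨i, hi⟩ = xi), pA a τ = pI i xi) :
    -- m ≡ 1 is a fixed point: the factor-to-variable update, with
    -- n_{j→a} = φ̂_j ∏_{a'∋j, a'≠a} 1, returns the constant message 1
    (∀ (a : F) (i : V) (hi : i ∈ A a) (xi : Fin q),
      (1 : ℝ) = ∑ τ ∈ Finset.univ.filter
          (fun τ : {x // x ∈ A a} → Fin q => τ ⟨i, hi⟩ = xi),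
        (pA a τ / ∏ j : {x // x ∈ A a}, pI (j : V) (τ j)) *
          ∏ j ∈ Finset.univ.erase (⟨i, hi⟩ : {x // x ∈ A a}),
            (pI (j : V) (τ j) *
              ∏ a' ∈ (Finset.univ.filter fun a' : F => (j : V) ∈ A a').erase a,
                (1 : ℝ))) ∧
    -- the factor beliefs b_a = ψ̂_a ∏_{i∈a} n_{i→a} equal p̂_a
    (∀ (a : F) (τ : {x // x ∈ A a} → Fin q),
      (pA a τ / ∏ j : {x // x ∈ A a}, pI (j : V) (τ j)) *
        ∏ j : {x // x ∈ A a},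
          (pI (j : V) (τ j) *
            ∏ a' ∈ (Finset.univ.filter fun a' : F => (j : V) ∈ A a').erase a,
              (1 : ℝ))
      = pA a τ) ∧
    -- the variable beliefs b_i = φ̂_i ∏_{a∋i} m_{a→i} equal p̂_i
    (∀ (i : V) (xi : Fin q),
      pI i xi * ∏ a ∈ Finset.univ.filter (fun a : F => i ∈ A a), (1 : ℝ)
        = pI i xi) := by
  refine ⟨?_, ?_, ?_⟩
  · intro a i hi xi
    have h1 : ∀ τ ∈ Finset.univ.filter
        (fun τ : {x // x ∈ A a} → Fin q => τ ⟨i, hi⟩ = xi),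
        (pA a τ / ∏ j : {x // x ∈ A a}, pI (j : V) (τ j)) *
          ∏ j ∈ Finset.univ.erase (⟨i, hi⟩ : {x // x ∈ A a}),
            (pI (j : V) (τ j) *
              ∏ a' ∈ (Finset.univ.filter fun a' : F => (j : V) ∈ A a').erase a,
                (1 : ℝ)) = pA a τ / pI i xi := by
      intro τ hτ
      simp only [Finset.mem_filter] at hτ
      have hprod : ∏ j : {x // x ∈ A a}, pI (j : V) (τ j)
          = pI i xi * ∏ j ∈ Finset.univ.erase (⟨i, hi⟩ : {x // x ∈ A a}),
              pI (j : V) (τ j) := by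
        rw [← Finset.mul_prod_erase Finset.univ _ (Finset.mem_univ ⟨i, hi⟩), hτ.2]
      have hne : (∏ j ∈ Finset.univ.erase (⟨i, hi⟩ : {x // x ∈ A a}),
          pI (j : V) (τ j)) ≠ 0 :=
        Finset.prod_ne_zero_iff.2 fun j _ => (hpI _ _).ne'
      simp only [Finset.prod_const_one, mul_one]
      rw [hprod, mul_comm (pI i xi), ← div_div, div_right_comm, div_mul_cancel₀ _ hne]
    rw [Finset.sum_congr rfl h1, ← Finset.sum_div, hcons a i hi xi,
      div_self (hpI i xi).ne']
  · intro a τ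
    simp only [Finset.prod_const_one, mul_one]
    rw [div_mul_cancel₀]
    exact Finset.prod_ne_zero_iff.2 fun j _ => (hpI _ _).ne'
  · intro i xi; simp
end

section
/- Suppose two sets of positive functions (φ, ψ) and (φ̂, ψ̂) on a factor graph satisfy: there exists a set of positive messages m⁰ that is a BP fixed point for (φ, ψ) whose beliefs equal the prescribed marginals p̂, where φ̂_i = p̂_i and ψ̂_a = p̂_a / ∏_{i∈a} p̂_i. Then the map sending a message set m to the message set with components m_{a→i}(x_i)/m⁰_{a→i}(x_i) is a bijection between the BP fixed points of (φ, ψ) and the BP fixed points of (φ̂, ψ̂). -/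
/-!
Dividing `p̂_a` by `∏_{j ∈ a} p̂_j` leaves `ψ_a / ∏_{j ∈ a} m⁰_{a→j}`, and multiplying `p̂_j` by
`∏_{a' ∋ j, a' ≠ a} m_{a'→j} / m⁰_{a'→j}` gives `m⁰_{a→j} φ_j ∏_{a' ∋ j, a' ≠ a} m_{a'→j}`. Hence in
the `(φ̂, ψ̂)`-update of `m / m⁰` all factors `m⁰_{a→j}` with `j ≠ i` cancel, and it equals the
`(φ, ψ)`-update of `m` divided by `m⁰_{a→i}(x_i)`. So `m` is a fixed point for `(φ, ψ)` exactly
when `m / m⁰` is one for `(φ̂, ψ̂)`, and `m ↦ m / m⁰` is invertible because `m⁰` is positive.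
-/

open Finset

/-- The BP fixed-point equations (messages `m` only, with the
variable-to-factor messages substituted). -/
def IsBPFixedPoint
    {V F : Type*} [Fintype V] [Fintype F] [DecidableEq V] [DecidableEq F]
    {q : ℕ} (A : F → Finset V)
    (φ : V → Fin q → ℝ) (ψ : ∀ a : F, ({x // x ∈ A a} → Fin q) → ℝ)
    (m : F → V → Fin q → ℝ) : Prop :=
  ∀ (a : F) (i : V) (hi : i ∈ A a) (xi : Fin q),
    m a i xi = ∑ τ ∈ Finset.univ.filter
        (fun τ : {x // x ∈ A a} → Fin q => τ ⟨i, hi⟩ = xi),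
      ψ a τ * ∏ j ∈ Finset.univ.erase (⟨i, hi⟩ : {x // x ∈ A a}),
        (φ (j : V) (τ j) *
          ∏ a' ∈ (Finset.univ.filter fun a' : F => (j : V) ∈ A a').erase a,
            m a' (j : V) (τ j))

section Reparametrization

variable {V F : Type*} [Fintype F] [DecidableEq V] [DecidableEq F] {q : ℕ} (A : F → Finset V)

def bpUpdate (φ : V → Fin q → ℝ) (ψ : ∀ a : F, ({x // x ∈ A a} → Fin q) → ℝ)
    (m : F → V → Fin q → ℝ) (a : F) (i : V) (hi : i ∈ A a) (xi : Fin q) : ℝ :=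
  ∑ τ ∈ univ.filter (fun τ : {x // x ∈ A a} → Fin q => τ ⟨i, hi⟩ = xi),
    ψ a τ * ∏ j ∈ univ.erase (⟨i, hi⟩ : {x // x ∈ A a}),
      (φ (j : V) (τ j) *
        ∏ a' ∈ (univ.filter fun a' : F => (j : V) ∈ A a').erase a, m a' (j : V) (τ j))

theorem isBPFixedPoint_iff [Fintype V] (φ : V → Fin q → ℝ)
    (ψ : ∀ a : F, ({x // x ∈ A a} → Fin q) → ℝ) (m : F → V → Fin q → ℝ) :
    IsBPFixedPoint A φ ψ m ↔ ∀ a i hi xi, m a i xi = bpUpdate A φ ψ m a i hi xi :=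
  Iff.rfl

def factorBelief (φ : V → Fin q → ℝ) (ψ : ∀ a : F, ({x // x ∈ A a} → Fin q) → ℝ)
    (m : F → V → Fin q → ℝ) (a : F) (τ : {x // x ∈ A a} → Fin q) : ℝ :=
  ψ a τ * ∏ j : {x // x ∈ A a},
    (φ (j : V) (τ j) *
      ∏ a' ∈ (univ.filter fun a' : F => (j : V) ∈ A a').erase a, m a' (j : V) (τ j))

def varBelief (φ : V → Fin q → ℝ) (m : F → V → Fin q → ℝ) (i : V) (xi : Fin q) : ℝ :=
  φ i xi * ∏ a ∈ univ.filter (fun a : F => i ∈ A a), m a i xi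

/-- The factor functions `ψ̂_a = p̂_a / ∏_{i ∈ a} p̂_i`, with `p̂` the beliefs at `m`. -/
noncomputable def reparamFactor (φ : V → Fin q → ℝ)
    (ψ : ∀ a : F, ({x // x ∈ A a} → Fin q) → ℝ)
    (m : F → V → Fin q → ℝ) (a : F) (τ : {x // x ∈ A a} → Fin q) : ℝ :=
  factorBelief A φ ψ m a τ / ∏ j : {x // x ∈ A a}, varBelief A φ m j (τ j)

variable {A}

theorem varBelief_eq_mul_prod_erase (φ : V → Fin q → ℝ) (m : F → V → Fin q → ℝ)
    {a : F} {i : V} (hi : i ∈ A a) (xi : Fin q) :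
    varBelief A φ m i xi =
      φ i xi * m a i xi * ∏ a' ∈ (univ.filter fun a' : F => i ∈ A a').erase a, m a' i xi := by
  rw [varBelief, mul_assoc,
    mul_prod_erase _ (fun a' => m a' i xi) (mem_filter.mpr ⟨mem_univ a, hi⟩)]

theorem reparamFactor_eq {φ : V → Fin q → ℝ} (hφ : ∀ i xi, φ i xi ≠ 0)
    (ψ : ∀ a : F, ({x // x ∈ A a} → Fin q) → ℝ) {m : F → V → Fin q → ℝ}
    (hm : ∀ a i xi, m a i xi ≠ 0) (a : F) (τ : {x // x ∈ A a} → Fin q) :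
    reparamFactor A φ ψ m a τ = ψ a τ / ∏ j : {x // x ∈ A a}, m a j (τ j) := by
  set R : {x // x ∈ A a} → ℝ := fun j =>
    ∏ a' ∈ (univ.filter fun a' : F => (j : V) ∈ A a').erase a, m a' j (τ j)
  have hsplit : ∏ j : {x // x ∈ A a}, varBelief A φ m j (τ j) =
      (∏ j : {x // x ∈ A a}, m a j (τ j)) * ∏ j : {x // x ∈ A a}, (φ j (τ j) * R j) := by
    rw [← prod_mul_distrib]
    refine prod_congr rfl fun j _ => ?_
    rw [varBelief_eq_mul_prod_erase φ m j.2]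
    ring
  have hR : ∏ j : {x // x ∈ A a}, (φ j (τ j) * R j) ≠ 0 :=
    prod_ne_zero_iff.mpr fun j _ =>
      mul_ne_zero (hφ _ _) (prod_ne_zero_iff.mpr fun a' _ => hm a' _ _)
  rw [reparamFactor, hsplit, factorBelief, mul_div_mul_right _ _ hR]

theorem varBelief_mul_prod_div {φ : V → Fin q → ℝ} {m0 : F → V → Fin q → ℝ}
    (hm0 : ∀ a i xi, m0 a i xi ≠ 0) (m : F → V → Fin q → ℝ)
    {a : F} {j : V} (hj : j ∈ A a) (x : Fin q) :
    varBelief A φ m0 j x *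
        ∏ a' ∈ (univ.filter fun a' : F => j ∈ A a').erase a, m a' j x / m0 a' j x =
      m0 a j x * (φ j x * ∏ a' ∈ (univ.filter fun a' : F => j ∈ A a').erase a, m a' j x) := by
  rw [varBelief_eq_mul_prod_erase φ m0 hj, prod_div_distrib]
  have : ∏ a' ∈ (univ.filter fun a' : F => j ∈ A a').erase a, m0 a' j x ≠ 0 :=
    prod_ne_zero_iff.mpr fun a' _ => hm0 a' j x
  field_simp

theorem bpUpdate_reparam {φ : V → Fin q → ℝ} (hφ : ∀ i xi, φ i xi ≠ 0)
    (ψ : ∀ a : F, ({x // x ∈ A a} → Fin q) → ℝ) {m0 : F → V → Fin q → ℝ}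
    (hm0 : ∀ a i xi, m0 a i xi ≠ 0) (m : F → V → Fin q → ℝ)
    (a : F) (i : V) (hi : i ∈ A a) (xi : Fin q) :
    bpUpdate A (varBelief A φ m0) (reparamFactor A φ ψ m0)
        (fun a i xi => m a i xi / m0 a i xi) a i hi xi =
      bpUpdate A φ ψ m a i hi xi / m0 a i xi := by
  rw [bpUpdate, bpUpdate, sum_div]
  refine sum_congr rfl fun τ hτ => ?_
  have hτi : τ ⟨i, hi⟩ = xi := (mem_filter.mp hτ).2
  set T : {x // x ∈ A a} → ℝ := fun j => φ j (τ j) *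
    ∏ a' ∈ (univ.filter fun a' : F => (j : V) ∈ A a').erase a, m a' j (τ j)
  set e : {x // x ∈ A a} := ⟨i, hi⟩
  have hprod : ∏ j ∈ univ.erase e, (varBelief A φ m0 j (τ j) *
        ∏ a' ∈ (univ.filter fun a' : F => (j : V) ∈ A a').erase a,
          m a' j (τ j) / m0 a' j (τ j)) =
      (∏ j ∈ univ.erase e, m0 a j (τ j)) * ∏ j ∈ univ.erase e, T j := by
    rw [← prod_mul_distrib]
    exact prod_congr rfl fun j _ => varBelief_mul_prod_div hm0 m j.2 (τ j)
  rw [reparamFactor_eq hφ ψ hm0, hprod,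
    ← mul_prod_erase univ (fun j : {x // x ∈ A a} => m0 a j (τ j)) (mem_univ e), hτi]
  have hμ : ∏ j ∈ univ.erase e, m0 a j (τ j) ≠ 0 :=
    prod_ne_zero_iff.mpr fun j _ => hm0 a j (τ j)
  change _ = _ / m0 a e xi
  field_simp

theorem isBPFixedPoint_iff_reparam [Fintype V] {φ : V → Fin q → ℝ}
    (hφ : ∀ i xi, φ i xi ≠ 0)
    (ψ : ∀ a : F, ({x // x ∈ A a} → Fin q) → ℝ) {m0 : F → V → Fin q → ℝ}
    (hm0 : ∀ a i xi, m0 a i xi ≠ 0) (m : F → V → Fin q → ℝ) :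
    IsBPFixedPoint A φ ψ m ↔
      IsBPFixedPoint A (varBelief A φ m0) (reparamFactor A φ ψ m0)
        (fun a i xi => m a i xi / m0 a i xi) := by
  simp only [isBPFixedPoint_iff]
  refine forall₄_congr fun a i hi xi => ?_
  rw [bpUpdate_reparam hφ ψ hm0, div_left_inj' (hm0 a i xi)]

end Reparametrization

theorem bijective_pointwise_div {α β γ G₀ : Type*} [GroupWithZero G₀] {m0 : α → β → γ → G₀}
    (hm0 : ∀ a i x, m0 a i x ≠ 0) :
    Function.Bijective (fun m : α → β → γ → G₀ => fun a i x => m a i x / m0 a i x) :=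
  Function.bijective_iff_has_inverse.mpr ⟨fun n a i x => n a i x * m0 a i x,
    fun m => by funext a i x; exact div_mul_cancel₀ _ (hm0 a i x),
    fun n => by funext a i x; exact mul_div_cancel_right₀ _ (hm0 a i x)⟩

theorem fixed_points_bijection_general
    {V F : Type*} [Fintype V] [Fintype F] [DecidableEq V] [DecidableEq F]
    {q : ℕ} (A : F → Finset V)
    (φ : V → Fin q → ℝ) (ψ : ∀ a : F, ({x // x ∈ A a} → Fin q) → ℝ)
    (hφ : ∀ i xi, 0 < φ i xi)
    (m0 : F → V → Fin q → ℝ) (hm0 : ∀ a i xi, 0 < m0 a i xi)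
    (pA : ∀ a : F, ({x // x ∈ A a} → Fin q) → ℝ) (pI : V → Fin q → ℝ)
    -- the beliefs at m⁰ equal the prescribed marginals p̂
    (hpA : ∀ (a : F) (τ : {x // x ∈ A a} → Fin q),
      pA a τ = ψ a τ * ∏ j : {x // x ∈ A a},
        (φ (j : V) (τ j) *
          ∏ a' ∈ (Finset.univ.filter fun a' : F => (j : V) ∈ A a').erase a,
            m0 a' (j : V) (τ j)))
    (hpI : ∀ (i : V) (xi : Fin q),
      pI i xi = φ i xi *
        ∏ a ∈ Finset.univ.filter (fun a : F => i ∈ A a), m0 a i xi) :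
    (∀ m : F → V → Fin q → ℝ,
      IsBPFixedPoint A φ ψ m ↔
        IsBPFixedPoint A pI
          (fun a τ => pA a τ / ∏ j : {x // x ∈ A a}, pI (j : V) (τ j))
          (fun a i xi => m a i xi / m0 a i xi)) ∧
    Function.Bijective
      (fun m : F → V → Fin q → ℝ =>
        (fun a i xi => m a i xi / m0 a i xi : F → V → Fin q → ℝ)) := by
  obtain rfl : pA = factorBelief A φ ψ m0 := funext fun a => funext (hpA a)
  obtain rfl : pI = varBelief A φ m0 := funext fun i => funext (hpI i)
  have hm0' : ∀ a i xi, m0 a i xi ≠ 0 := fun a i xi => (hm0 a i xi).ne'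
  exact ⟨isBPFixedPoint_iff_reparam (fun i xi => (hφ i xi).ne') ψ hm0',
    bijective_pointwise_div hm0'⟩

/-- if `m⁰` is a positive BP fixed point for `(φ, ψ)` whose
beliefs equal the prescribed marginals `p̂`, then `m ↦ m/m⁰` is a bijection
mapping the BP fixed points of `(φ, ψ)` exactly onto the BP fixed points of
`(φ̂, ψ̂)`, where `φ̂_i = p̂_i` and `ψ̂_a = p̂_a/∏_{i∈a} p̂_i`. -/
theorem fixed_points_bijection
    {V F : Type*} [Fintype V] [Fintype F] [DecidableEq V] [DecidableEq F]
    {q : ℕ} (A : F → Finset V)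
    (φ : V → Fin q → ℝ) (ψ : ∀ a : F, ({x // x ∈ A a} → Fin q) → ℝ)
    (hφ : ∀ i xi, 0 < φ i xi) (hψ : ∀ a τ, 0 < ψ a τ)
    (m0 : F → V → Fin q → ℝ) (hm0 : ∀ a i xi, 0 < m0 a i xi)
    (hfix : IsBPFixedPoint A φ ψ m0)
    (pA : ∀ a : F, ({x // x ∈ A a} → Fin q) → ℝ) (pI : V → Fin q → ℝ)
    -- the beliefs at m⁰ equal the prescribed marginals p̂
    (hpA : ∀ (a : F) (τ : {x // x ∈ A a} → Fin q),
      pA a τ = ψ a τ * ∏ j : {x // x ∈ A a},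
        (φ (j : V) (τ j) *
          ∏ a' ∈ (Finset.univ.filter fun a' : F => (j : V) ∈ A a').erase a,
            m0 a' (j : V) (τ j)))
    (hpI : ∀ (i : V) (xi : Fin q),
      pI i xi = φ i xi *
        ∏ a ∈ Finset.univ.filter (fun a : F => i ∈ A a), m0 a i xi) :
    (∀ m : F → V → Fin q → ℝ,
      IsBPFixedPoint A φ ψ m ↔
        IsBPFixedPoint A pI
          (fun a τ => pA a τ / ∏ j : {x // x ∈ A a}, pI (j : V) (τ j))
          (fun a i xi => m a i xi / m0 a i xi)) ∧
    Function.Bijective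
      (fun m : F → V → Fin q → ℝ =>
        (fun a i xi => m a i xi / m0 a i xi : F → V → Fin q → ℝ)) :=
  fixed_points_bijection_general A φ ψ hφ m0 hm0 pA pI hpA hpI
end

section
/- At a stationary point of the Lagrangian of the generalized Bethe free energy where the marginalization and normalization constraints hold, the free energy value satisfies F(b) = ∑_i γ_i − ∑_a h_a − ∑_i h_i, where γ_i are the Lagrange multipliers of the normalization constraints. -/
open Finset

/-- at a stationary point of the Lagrangian of the generalized
Bethe free energy where the marginalization and normalization constraints
hold, the free energy value is `F(b) = ∑_i γ_i − ∑_a h_a − ∑_i h_i`. -/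
theorem generalized_bethe_value_at_stationary_point
    {V F : Type*} [Fintype V] [Fintype F] [DecidableEq V] [DecidableEq F]
    {q : ℕ} (A : F → Finset V) (hA' : ∀ a, (A a).Nonempty)
    (φ : V → Fin q → ℝ) (ψ : ∀ a : F, ({x // x ∈ A a} → Fin q) → ℝ)
    (hφ : ∀ i xi, 0 < φ i xi) (hψ : ∀ a τ, 0 < ψ a τ)
    (eA hA : F → ℝ) (eI hI : V → ℝ)
    (hAne : ∀ a, hA a ≠ 0) (hIne : ∀ i, hI i ≠ 0)
    (bA : ∀ a : F, ({x // x ∈ A a} → Fin q) → ℝ) (bI : V → Fin q → ℝ)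
    (lam : F → V → Fin q → ℝ) (γ : V → ℝ)
    -- the stationary form of the beliefs
    (hformA : ∀ (a : F) (τ : {x // x ∈ A a} → Fin q),
      bA a τ = ψ a τ ^ (eA a / hA a) *
        Real.exp ((1 / hA a) * (∑ j : {x // x ∈ A a}, lam a (j : V) (τ j)) - 1))
    (hformI : ∀ (i : V) (xi : Fin q),
      bI i xi = φ i xi ^ (eI i / hI i) *
        Real.exp ((1 / hI i) *
          (γ i - ∑ a ∈ Finset.univ.filter (fun a : F => i ∈ A a), lam a i xi)
          - 1))
    -- the marginalization constraints
    (hmarg : ∀ (a : F) (j : {x // x ∈ A a}) (xi : Fin q),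
      ∑ τ ∈ Finset.univ.filter
          (fun τ : {x // x ∈ A a} → Fin q => τ j = xi), bA a τ = bI (j : V) xi)
    -- the normalization constraints
    (hnorm : ∀ i : V, ∑ xi, bI i xi = 1) :
    (∑ a, (eA a * (-∑ τ, bA a τ * Real.log (ψ a τ))
          - hA a * (-∑ τ, bA a τ * Real.log (bA a τ))))
      + (∑ i, (eI i * (-∑ xi, bI i xi * Real.log (φ i xi))
          - hI i * (-∑ xi, bI i xi * Real.log (bI i xi))))
    = ∑ i, γ i - ∑ a, hA a - ∑ i, hI i := by

  classical
  -- log of factor beliefs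
  have hlogA : ∀ (a : F) (τ : {x // x ∈ A a} → Fin q),
      Real.log (bA a τ) = (eA a / hA a) * Real.log (ψ a τ)
        + ((1 / hA a) * (∑ j : {x // x ∈ A a}, lam a (j : V) (τ j)) - 1) := by
    intro a τ
    rw [hformA, Real.log_mul (ne_of_gt (Real.rpow_pos_of_pos (hψ a τ) _))
      (Real.exp_ne_zero _), Real.log_rpow (hψ a τ), Real.log_exp]
  have hlogI : ∀ (i : V) (xi : Fin q),
      Real.log (bI i xi) = (eI i / hI i) * Real.log (φ i xi)
        + ((1 / hI i) * (γ i - ∑ a ∈ Finset.univ.filter (fun a : F => i ∈ A a),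
            lam a i xi) - 1) := by
    intro i xi
    rw [hformI, Real.log_mul (ne_of_gt (Real.rpow_pos_of_pos (hφ i xi) _))
      (Real.exp_ne_zero _), Real.log_rpow (hφ i xi), Real.log_exp]
  -- factor beliefs are normalized
  have hZ : ∀ a : F, ∑ τ, bA a τ = 1 := by
    intro a
    obtain ⟨i0, hi0⟩ := hA' a
    have hf := Finset.sum_fiberwise (Finset.univ : Finset ({x // x ∈ A a} → Fin q))
      (fun τ => τ ⟨i0, hi0⟩) (bA a)
    rw [← hf]
    simp only [hmarg a ⟨i0, hi0⟩]
    exact hnorm i0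
  -- key identity for the factor terms
  have keyA : ∀ a : F,
      eA a * (-∑ τ, bA a τ * Real.log (ψ a τ))
        - hA a * (-∑ τ, bA a τ * Real.log (bA a τ))
      = (∑ τ, bA a τ * ∑ j : {x // x ∈ A a}, lam a (j : V) (τ j)) - hA a := by
    intro a
    have hS : ∑ τ, bA a τ * Real.log (bA a τ)
        = (eA a / hA a) * (∑ τ, bA a τ * Real.log (ψ a τ))
          + (1 / hA a) * (∑ τ, bA a τ * ∑ j : {x // x ∈ A a}, lam a (j : V) (τ j))
          - 1 := by
      calc ∑ τ, bA a τ * Real.log (bA a τ)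
          = ∑ τ, ((eA a / hA a) * (bA a τ * Real.log (ψ a τ))
              + (1 / hA a) * (bA a τ * ∑ j : {x // x ∈ A a}, lam a (j : V) (τ j))
              - bA a τ) := by
            refine Finset.sum_congr rfl fun τ _ => ?_
            rw [hlogA a τ]; ring
        _ = _ := by
            rw [Finset.sum_sub_distrib, Finset.sum_add_distrib, ← Finset.mul_sum,
              ← Finset.mul_sum, hZ a]
    rw [hS]
    have hne := hAne a
    field_simp
    ring
  -- key identity for the variable terms
  have keyI : ∀ i : V,
      eI i * (-∑ xi, bI i xi * Real.log (φ i xi))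
        - hI i * (-∑ xi, bI i xi * Real.log (bI i xi))
      = γ i - (∑ a ∈ Finset.univ.filter (fun a : F => i ∈ A a),
          ∑ xi, lam a i xi * bI i xi) - hI i := by
    intro i
    have hS : ∑ xi, bI i xi * Real.log (bI i xi)
        = (eI i / hI i) * (∑ xi, bI i xi * Real.log (φ i xi))
          + (1 / hI i) * (γ i - ∑ a ∈ Finset.univ.filter (fun a : F => i ∈ A a),
              ∑ xi, lam a i xi * bI i xi)
          - 1 := by
      calc ∑ xi, bI i xi * Real.log (bI i xi)
          = ∑ xi, ((eI i / hI i) * (bI i xi * Real.log (φ i xi))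
              + (1 / hI i) * (γ i * bI i xi
                - ∑ a ∈ Finset.univ.filter (fun a : F => i ∈ A a),
                    lam a i xi * bI i xi)
              - bI i xi) := by
            refine Finset.sum_congr rfl fun xi _ => ?_
            have hsm : ∑ a ∈ Finset.univ.filter (fun a : F => i ∈ A a),
                lam a i xi * bI i xi
                = (∑ a ∈ Finset.univ.filter (fun a : F => i ∈ A a),
                    lam a i xi) * bI i xi := (Finset.sum_mul ..).symm
            rw [hlogI i xi, hsm]
            ring
        _ = _ := by
            rw [Finset.sum_sub_distrib, Finset.sum_add_distrib, ← Finset.mul_sum,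
              ← Finset.mul_sum, Finset.sum_sub_distrib, ← Finset.mul_sum, hnorm i,
              mul_one, Finset.sum_comm]
    rw [hS]
    have hne := hIne i
    field_simp
    ring
  -- rewrite the lambda-weighted factor sum via the marginalization constraints
  have hL : ∀ a : F,
      (∑ τ, bA a τ * ∑ j : {x // x ∈ A a}, lam a (j : V) (τ j))
      = ∑ i ∈ A a, ∑ xi, lam a i xi * bI i xi := by
    intro a
    rw [← Finset.sum_coe_sort (A a) (fun i => ∑ xi, lam a i xi * bI i xi)]
    simp_rw [Finset.mul_sum]
    rw [Finset.sum_comm]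
    refine Finset.sum_congr rfl fun j _ => ?_
    have hf := Finset.sum_fiberwise (Finset.univ : Finset ({x // x ∈ A a} → Fin q))
      (fun τ => τ j) (fun τ => bA a τ * lam a (j : V) (τ j))
    rw [← hf]
    refine Finset.sum_congr rfl fun xi _ => ?_
    have : ∑ τ ∈ Finset.univ.filter (fun τ : {x // x ∈ A a} → Fin q => τ j = xi),
        bA a τ * lam a (j : V) (τ j)
        = ∑ τ ∈ Finset.univ.filter (fun τ : {x // x ∈ A a} → Fin q => τ j = xi),
        bA a τ * lam a (j : V) xi := by
      refine Finset.sum_congr rfl fun τ hτ => ?_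
      rw [(Finset.mem_filter.mp hτ).2]
    rw [this, ← Finset.sum_mul, hmarg a j xi]
    ring
  -- swap the double sum
  have hswap : ∑ a : F, ∑ i ∈ A a, ∑ xi, lam a i xi * bI i xi
      = ∑ i : V, ∑ a ∈ Finset.univ.filter (fun a : F => i ∈ A a),
          ∑ xi, lam a i xi * bI i xi := by
    refine Finset.sum_comm' ?_
    intro a i
    simp [Finset.mem_filter]
  calc (∑ a, (eA a * (-∑ τ, bA a τ * Real.log (ψ a τ))
          - hA a * (-∑ τ, bA a τ * Real.log (bA a τ))))
      + (∑ i, (eI i * (-∑ xi, bI i xi * Real.log (φ i xi))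
          - hI i * (-∑ xi, bI i xi * Real.log (bI i xi))))
      = (∑ a, ((∑ i ∈ A a, ∑ xi, lam a i xi * bI i xi) - hA a))
        + (∑ i, (γ i - (∑ a ∈ Finset.univ.filter (fun a : F => i ∈ A a),
            ∑ xi, lam a i xi * bI i xi) - hI i)) := by
        rw [Finset.sum_congr rfl fun a _ => (keyA a).trans (by rw [hL a]),
          Finset.sum_congr rfl fun i _ => keyI i]
    _ = ∑ i, γ i - ∑ a, hA a - ∑ i, hI i := by
        rw [Finset.sum_sub_distrib, Finset.sum_sub_distrib, Finset.sum_sub_distrib,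
          hswap]
        ring
end

section
/- In the generalized message-passing update, the coefficient of log m_{a→i} appearing in the update of m_{a→i} itself through n_{j→a} for j ≠ i vanishes for all nodes if and only if there is a constant h such that h_a = h for all factors a and h_i = (1 − d_i)h for all variables i, where d_i is the degree of i. Precisely: −h_a(1 − h_a/(h_i + ∑_{b∋i} h_b)) = 0 for all i and all a ∋ i if and only if h_a = h_i + ∑_{b∋i} h_b for all i, a ∋ i (assuming h_a ≠ 0), which forces all h_a equal to some h and h_i = (1 − d_i)h. -/
open Finset

/-- the feedback coefficient `−h_a(1 − h_a/(h_i + ∑_{b∋i} h_b))`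
vanishes for all `i` and all `a ∋ i` iff `h_a = h_i + ∑_{b∋i} h_b` for all
`i, a ∋ i`, and (on a connected factor graph) this holds iff there is a
constant `h` with `h_a = h` for all factors and `h_i = (1 − d_i)h` for all
variables, where `d_i` is the degree of variable `i`. -/
theorem feedback_vanishes_iff_lbp_counting
    {V F : Type*} [Fintype V] [Fintype F] [DecidableEq V] [DecidableEq F]
    (A : F → Finset V)
    -- every variable belongs to at least one factor
    (hdeg : ∀ i : V, 1 ≤ (Finset.univ.filter fun a : F => i ∈ A a).card)
    -- every factor contains at least two variables
    (hcard : ∀ a : F, 2 ≤ (A a).card)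
    -- the factor graph is connected
    (hconn : ∀ a b : F,
      Relation.ReflTransGen (fun a' b' : F => ∃ i : V, i ∈ A a' ∧ i ∈ A b') a b)
    (hNF : Nonempty F)
    (hA : F → ℝ) (hI : V → ℝ) (hAne : ∀ a, hA a ≠ 0) :
    ((∀ (i : V) (a : F), a ∈ Finset.univ.filter (fun a : F => i ∈ A a) →
        -hA a * (1 - hA a /
          (hI i + ∑ b ∈ Finset.univ.filter (fun b : F => i ∈ A b), hA b)) = 0)
      ↔ (∀ (i : V) (a : F), a ∈ Finset.univ.filter (fun a : F => i ∈ A a) →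
        hA a = hI i + ∑ b ∈ Finset.univ.filter (fun b : F => i ∈ A b), hA b)) ∧
    ((∀ (i : V) (a : F), a ∈ Finset.univ.filter (fun a : F => i ∈ A a) →
        hA a = hI i + ∑ b ∈ Finset.univ.filter (fun b : F => i ∈ A b), hA b)
      ↔ ∃ h : ℝ, (∀ a : F, hA a = h) ∧
        ∀ i : V,
          hI i = (1 - ((Finset.univ.filter fun a : F => i ∈ A a).card : ℝ)) * h) := by
  constructor
  · constructor
    · intro H i a hai
      have h0 := H i a hai
      set S := hI i + ∑ b ∈ Finset.univ.filter (fun b : F => i ∈ A b), hA b with hS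
      have h1 : 1 - hA a / S = 0 := by
        rcases mul_eq_zero.mp h0 with h | h
        · exact absurd (neg_eq_zero.mp h) (hAne a)
        · exact h
      have h2 : hA a / S = 1 := by linarith
      have hSne : S ≠ 0 := by
        intro h
        rw [h, div_zero] at h2
        norm_num at h2
      field_simp at h2
      exact h2
    · intro H i a hai
      have h := H i a hai
      rw [← h, div_self (hAne a)]
      ring
  · constructor
    · intro H
      obtain ⟨a₀⟩ := hNF
      set h := hA a₀ with hh
      -- all hA equal along adjacency
      have hconst : ∀ a : F, hA a = h := by
        intro a
        have hrel := hconn a₀ a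
        induction hrel with
        | refl => rfl
        | tail _ hstep ih =>
          obtain ⟨i, hib, hic⟩ := hstep
          rename_i b c _
          have h1 := H i b (by simp [hib])
          have h2 := H i c (by simp [hic])
          rw [← ih, h1, h2]
      refine ⟨h, hconst, fun i => ?_⟩
      have h1 : 0 < (Finset.univ.filter fun a : F => i ∈ A a).card := hdeg i
      obtain ⟨a, ha⟩ := Finset.card_pos.mp h1
      have h2 := H i a ha
      have hsum : ∑ b ∈ Finset.univ.filter (fun b : F => i ∈ A b), hA b
          = ((Finset.univ.filter fun a : F => i ∈ A a).card : ℝ) * h := by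
        rw [Finset.sum_congr rfl (fun b _ => hconst b), Finset.sum_const, nsmul_eq_mul]
      rw [hconst a, hsum] at h2
      linarith
    · rintro ⟨h, hc, hi⟩ i a hai
      have hsum : ∑ b ∈ Finset.univ.filter (fun b : F => i ∈ A b), hA b
          = ((Finset.univ.filter fun a : F => i ∈ A a).card : ℝ) * h := by
        rw [Finset.sum_congr rfl (fun b _ => hc b), Finset.sum_const, nsmul_eq_mul]
      rw [hc a, hsum, hi i]
      ring
end
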